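/- tr(A(R − I)BR) = (tr(AR) − tr(A)/2)(tr(BR) − tr(B)/2) − (1/2)tr([A,B]R) − (1/2)tr(AB) + tr(A)tr(B)/4. -/
import Mathlib

/-- A trace-one idempotent 2×2 matrix is a rank one projection: `R X R = tr(XR) • R`. -/
lemma aux_RXR (R X : Matrix (Fin 2) (Fin 2) ℂ) (hR : R * R = R) (htrR : R.trace = 1) :
    R * X * R = (X * R).trace • R := by
  have h00 : (R * R) 0 0 = R 0 0 := by rw [hR]
  simp [Matrix.mul_apply, Fin.sum_univ_two, Matrix.trace_fin_two] at h00 htrR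
  have hqs : R 0 1 * R 1 0 = R 0 0 * R 1 1 := by
    linear_combination h00 - R 0 0 * htrR
  ext i j
  fin_cases i <;> fin_cases j <;>
    simp [Matrix.mul_apply, Fin.sum_univ_two, Matrix.trace_fin_two, Matrix.smul_apply,
      smul_eq_mul]
  · linear_combination X 1 1 * hqs
  · linear_combination (- X 0 1) * hqs
  · linear_combination (- X 1 0) * hqs
  · linear_combination X 0 0 * hqs

/-- Bilinearized Cayley–Hamilton for 2×2 matrices. -/
lemma aux_CH (A B : Matrix (Fin 2) (Fin 2) ℂ) :
    A * B + B * A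
      = A.trace • B + B.trace • A + ((A * B).trace - A.trace * B.trace) • (1 : Matrix (Fin 2) (Fin 2) ℂ) := by
  ext i j
  fin_cases i <;> fin_cases j <;>
    simp [Matrix.mul_apply, Fin.sum_univ_two, Matrix.trace_fin_two, Matrix.one_apply] <;> ring

/-- For `2×2` matrices `A, B` with `det A = det B = 0` and an idempotent `R`
with `tr R = 1`:
`tr(A(R − I)BR) = (tr(AR) − tr A/2)(tr(BR) − tr B/2) − (1/2)tr([A,B]R)
− (1/2)tr(AB) + tr A · tr B / 4`. -/
theorem trace_A_Rsub_B_R (A B R : Matrix (Fin 2) (Fin 2) ℂ)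
    (hA : A.det = 0) (hB : B.det = 0) (hR : R * R = R) (htrR : R.trace = 1) :
    (A * (R - 1) * B * R).trace
      = ((A * R).trace - A.trace / 2) * ((B * R).trace - B.trace / 2)
        - (1 / 2) * ((A * B - B * A) * R).trace
        - (1 / 2) * (A * B).trace
        + A.trace * B.trace / 4 := by
  have e1 : (A * R * B * R).trace = (B * R).trace * (A * R).trace := by
    have : A * R * B * R = A * (R * B * R) := by noncomm_ring
    rw [this, aux_RXR R B hR htrR, Matrix.mul_smul, Matrix.trace_smul, smul_eq_mul]
  have e2 : (A * B * R).trace + (B * A * R).trace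
      = A.trace * (B * R).trace + B.trace * (A * R).trace
        + ((A * B).trace - A.trace * B.trace) * R.trace := by
    have h := congrArg (fun M => (M * R).trace) (aux_CH A B)
    simp only [Matrix.add_mul, Matrix.smul_mul, Matrix.trace_add, Matrix.trace_smul,
      smul_eq_mul, Matrix.one_mul] at h
    exact h
  have eL : A * (R - 1) * B * R = A * R * B * R - A * B * R := by noncomm_ring
  rw [eL, Matrix.trace_sub]
  have e3 : ((A * B - B * A) * R).trace = (A * B * R).trace - (B * A * R).trace := by
    rw [Matrix.sub_mul, Matrix.trace_sub]
  rw [e3]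
  linear_combination e1 - (1/2) * e2 - ((A * B).trace - A.trace * B.trace)/2 * htrR
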